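/- arXiv:1608.00392 — 3 statements merged into one kernel-verified Lean document; each statement's English description precedes it below -/
import Mathlib

section
/- Let R be a (possibly noncommutative) unital ring, let f : A → R be a ring homomorphism, and regard R and its quotients by left ideals as left A-modules via f and left multiplication. If x, y ∈ R are such that R/Rx and R/Ry are finitely generated as A-modules, then R/R(xy) is finitely generated as an A-module. -/
/-!
Right multiplication by `y` induces `R/Rx → R/R(xy)`, whose image `Ry/R(xy)` is the kernel of
the projection `R/R(xy) → R/Ry`. This right-exact sequence is `R`-linear, hence `A`-linear,
and a module in the middle of a right-exact sequence with finite ends is finite.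
-/

open Submodule

section LeftIdealQuotient

variable {R : Type*} [Ring R]

theorem span_singleton_mul_le_span_singleton (x y : R) : R ∙ (x * y) ≤ R ∙ y :=
  (span_singleton_le_iff_mem _ _).mpr (mem_span_singleton.mpr ⟨x, rfl⟩)

def quotientMulRight (x y : R) : (R ⧸ R ∙ x) →ₗ[R] R ⧸ R ∙ (x * y) :=
  mapQ _ _ (LinearMap.toSpanSingleton R R y)
    ((span_singleton_le_iff_mem _ _).mpr (mem_span_singleton_self (x * y)))

theorem quotientMulRight_mk (x y r : R) :
    quotientMulRight x y (Submodule.Quotient.mk r) = Submodule.Quotient.mk (r * y) :=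
  rfl

theorem exact_quotientMulRight_factor (x y : R) :
    Function.Exact (quotientMulRight x y) (factor (span_singleton_mul_le_span_singleton x y)) := by
  refine fun q => Submodule.Quotient.induction_on _ q fun r => ?_
  change Submodule.Quotient.mk (p := R ∙ y) r = 0 ↔ _
  rw [Submodule.Quotient.mk_eq_zero, mem_span_singleton]
  constructor
  · rintro ⟨s, rfl⟩
    exact ⟨Submodule.Quotient.mk s, rfl⟩
  · rintro ⟨q, hq⟩
    induction q using Submodule.Quotient.induction_on with | H s => ?_
    rw [quotientMulRight_mk, Submodule.Quotient.eq] at hq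
    obtain ⟨t, ht⟩ := mem_span_singleton.mp (span_singleton_mul_le_span_singleton x y hq)
    exact ⟨s - t, by rw [sub_smul, ht, smul_eq_mul, sub_sub_cancel]⟩

variable {A : Type*} [Ring A] [Module A R] [IsScalarTower A R R]

theorem Module.Finite.quotient_span_singleton_mul (x y : R) [Module.Finite A (R ⧸ R ∙ x)]
    [Module.Finite A (R ⧸ R ∙ y)] : Module.Finite A (R ⧸ R ∙ (x * y)) :=
  .of_exact (R := A) (f := (quotientMulRight x y).restrictScalars A)
    (g := (factor (span_singleton_mul_le_span_singleton x y)).restrictScalars A)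
    (exact_quotientMulRight_factor x y)
    (factor_surjective (span_singleton_mul_le_span_singleton x y))

theorem span_setOf_mul_eq_restrictScalars (x : R) :
    span A {z : R | ∃ r : R, z = r * x} = (R ∙ x).restrictScalars A := by
  convert span_eq ((R ∙ x).restrictScalars A)
  ext z
  simp [mem_span_singleton, eq_comm]

theorem Module.finite_quotient_span_setOf_mul_iff (x : R) :
    Module.Finite A (R ⧸ span A {z : R | ∃ r : R, z = r * x}) ↔ Module.Finite A (R ⧸ R ∙ x) := by
  rw [span_setOf_mul_eq_restrictScalars]
  exact Module.Finite.equiv_iff (Submodule.Quotient.restrictScalarsEquiv A _)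

end LeftIdealQuotient

/-- Let `R` be a (possibly noncommutative) unital ring, `f : A → R` a ring homomorphism,
and regard `R` and its quotients by left ideals as left `A`-modules via `f` and left
multiplication.  If `x, y ∈ R` are such that `R/Rx` and `R/Ry` are finitely generated as
`A`-modules, then `R/R(xy)` is finitely generated as an `A`-module. -/
theorem span_mul_quotient_finite_of_finite {A R : Type*} [Ring A] [Ring R]
    (f : A →+* R) (x y : R) :
    letI : Module A R := Module.compHom R f
    Module.Finite A (R ⧸ Submodule.span A {z : R | ∃ r : R, z = r * x}) →
    Module.Finite A (R ⧸ Submodule.span A {z : R | ∃ r : R, z = r * y}) →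
    Module.Finite A (R ⧸ Submodule.span A {z : R | ∃ r : R, z = r * (x * y)}) := by
  let : Module A R := Module.compHom R f
  have : IsScalarTower A R R := ⟨fun a r s => mul_assoc (f a) r s⟩
  simp only [Module.finite_quotient_span_setOf_mul_iff]
  intro _ _
  exact Module.Finite.quotient_span_singleton_mul x y
end

section
/- Let p be a prime and let A be a commutative ring in which every integer coprime to p is invertible (for instance, a Z_p-algebra). Let I be an ideal of A satisfying I^p ⊆ p·I. Then I^n ⊆ n·I for every integer n ≥ 1. -/
/-! Writing `n = p ^ e * m` with `p ∤ m`, it suffices to combine two facts: `I ^ (p ^ e) ≤ p ^ e • I`,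
obtained by iterating the hypothesis, and `I ^ m ≤ m • I = I`, since `m` is a unit. The two
combine because the property "`I ^ k ≤ J * I`" is multiplicative in the pair `(k, J)`. -/

namespace Ideal

variable {A : Type*} [CommRing A] {I : Ideal A}

theorem pow_mul_le_mul_mul {J K : Ideal A} {k m : ℕ} (hk : k ≠ 0)
    (hJ : I ^ k ≤ J * I) (hK : I ^ m ≤ K * I) : I ^ (k * m) ≤ J * K * I :=
  calc I ^ (k * m) = (I ^ m) ^ k := by rw [mul_comm, pow_mul]
    _ ≤ (K * I) ^ k := pow_right_mono hK k
    _ = K ^ k * I ^ k := mul_pow _ _ _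
    _ ≤ K * (J * I) := mul_le_mul' (pow_le_self hk) hJ
    _ = J * K * I := by ring

theorem pow_pow_le_span_pow_mul {a : A} {k : ℕ} (hk : k ≠ 0) (h : I ^ k ≤ span {a} * I)
    (e : ℕ) : I ^ (k ^ e) ≤ span {a ^ e} * I := by
  induction e with
  | zero => simp
  | succ e ih =>
    rw [pow_succ', pow_succ', ← span_singleton_mul_span_singleton]
    exact pow_mul_le_mul_mul hk h ih

theorem pow_le_span_mul_of_isUnit {a : A} (ha : IsUnit a) {n : ℕ} (hn : n ≠ 0) :
    I ^ n ≤ span {a} * I := by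
  rw [span_singleton_eq_top.mpr ha, top_mul]
  exact pow_le_self hn

end Ideal

/-- Let `p` be a prime and `A` a commutative ring in which every integer coprime to `p` is
invertible.  If an ideal `I` of `A` satisfies `I ^ p ⊆ p·I`, then `I ^ n ⊆ n·I` for every
integer `n ≥ 1`. -/
theorem pow_le_smul_of_pow_prime_le (p : ℕ) (hp : p.Prime) (A : Type*) [CommRing A]
    (hunit : ∀ m : ℤ, IsCoprime m (p : ℤ) → IsUnit ((m : ℤ) : A))
    (I : Ideal A) (hI : I ^ p ≤ Ideal.span {(p : A)} * I) :
    ∀ n : ℕ, 1 ≤ n → I ^ n ≤ Ideal.span {(n : A)} * I := by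
  intro n hn
  obtain ⟨e, m, hpm, rfl⟩ := Nat.exists_eq_pow_mul_and_not_dvd (n := n) (by omega) p hp.ne_one
  have hm : m ≠ 0 := by rintro rfl; simp at hn
  have hm_unit : IsUnit (m : A) := by
    have hcop : IsCoprime (m : ℤ) (p : ℤ) :=
      Nat.isCoprime_iff_coprime.mpr ((hp.coprime_iff_not_dvd.mpr hpm).symm)
    exact_mod_cast hunit m hcop
  have hpow := Ideal.pow_pow_le_span_pow_mul hp.ne_zero hI e
  have hunit_part := Ideal.pow_le_span_mul_of_isUnit (I := I) hm_unit hm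
  rw [Nat.cast_mul, Nat.cast_pow, ← Ideal.span_singleton_mul_span_singleton]
  exact Ideal.pow_mul_le_mul_mul (pow_ne_zero e hp.ne_zero) hpow hunit_part
end

section
/- Let p be a prime, G a finite p-group of order p^r, and R any commutative ring. Let I_G be the augmentation ideal of the group algebra R[G], i.e., the kernel of the R-algebra map R[G] → R sending every g ∈ G to 1. Then I_G^{p^r} ⊆ p·R[G]. -/
/-!
Reducing coefficients modulo `p`, it suffices to show that `I_G ^ (p ^ r) = 0` in `S[G]` whenever
`p = 0` in `S`. Induct on `r`. A nontrivial `p`-group has a central element `z` of order `p`; the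
kernel of `S[G] → S[G ⧸ ⟨z⟩]` is the left ideal `S[G] (z - 1)`, so by induction any product of
`p ^ r` elements of `I_G` lies in it. As `z - 1` is central, a product of `p` such blocks lies in
`S[G] (z - 1) ^ p`, and `(z - 1) ^ p = z ^ p - 1 = 0` in characteristic `p`.
-/

open MonoidAlgebra

theorem sub_one_pow_eq_zero_of_pow_eq_one {A : Type*} [Ring A] {p : ℕ} (hp : p.Prime)
    (hpA : (p : A) = 0) {u : A} (hu : u ^ p = 1) : (u - 1) ^ p = 0 := by
  have h := (Commute.one_right (u - 1)).add_pow_prime_eq hp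
  rw [sub_add_cancel, hu, hpA, one_pow, zero_mul, zero_mul, zero_mul, add_zero] at h
  exact left_eq_add.mp (h.trans (add_comm _ _))

theorem Subgroup.normal_zpowers_of_mem_center {G : Type*} [Group G] {z : G}
    (hz : z ∈ Subgroup.center G) : (Subgroup.zpowers z).Normal where
  conj_mem n hn g := by
    rwa [Subgroup.mem_center_iff.mp (Subgroup.zpowers_le.mpr hz hn) g, mul_inv_cancel_right]

theorem IsPGroup.exists_mem_center_orderOf_eq {G : Type*} [Group G] {p n : ℕ} [Fact p.Prime]
    (hG : Nat.card G = p ^ n) (hn : 0 < n) : ∃ z ∈ Subgroup.center G, orderOf z = p := by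
  have : Finite G := Nat.finite_of_card_ne_zero (hG ▸ pow_ne_zero n (Fact.out : p.Prime).ne_zero)
  obtain ⟨k, hk, hcard⟩ := IsPGroup.card_center_eq_prime_pow hG hn
  obtain ⟨ζ, hζ⟩ := exists_prime_orderOf_dvd_card' (G := Subgroup.center G) p
    (hcard ▸ dvd_pow_self p hk.ne')
  exact ⟨ζ, ζ.2, (Subgroup.orderOf_coe ζ).trans hζ⟩

namespace Ideal

variable {A : Type*} [Semiring A] {δ : A}

theorem list_prod_mem_span_singleton_pow (hδ : ∀ a, Commute δ a) {L : List A}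
    (hL : ∀ a ∈ L, a ∈ span {δ}) : L.prod ∈ span {δ ^ L.length} := by
  induction L with
  | nil => exact mem_span_singleton'.mpr ⟨1, by simp⟩
  | cons a L ih =>
    obtain ⟨d, rfl⟩ := mem_span_singleton'.mp (hL a List.mem_cons_self)
    obtain ⟨e, he⟩ := mem_span_singleton'.mp (ih fun b hb => hL b (List.mem_cons_of_mem _ hb))
    refine mem_span_singleton'.mpr ⟨d * e, ?_⟩
    rw [List.prod_cons, ← he, List.length_cons, pow_succ']
    simp only [mul_assoc]
    rw [(hδ e).left_comm]

theorem list_prod_ofFn_eq_zero_of_forall_mem_span_singleton {s : Set A} {m n : ℕ}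
    (hδ : ∀ a, Commute δ a) (hδn : δ ^ n = 0)
    (hs : ∀ y : Fin m → A, (∀ j, y j ∈ s) → (List.ofFn y).prod ∈ span {δ})
    (x : Fin (m * n) → A) (hx : ∀ i, x i ∈ s) : (List.ofFn x).prod = 0 := by
  suffices h : ∀ b : Fin n → A, (∀ i, b i ∈ span {δ}) → (List.ofFn b).prod = 0 by
    rw [List.ofFn_mul', List.prod_flatten, List.map_ofFn]
    exact h _ fun i => hs _ fun j => hx _
  intro b hb
  have h := list_prod_mem_span_singleton_pow hδ (List.forall_mem_ofFn_iff.mpr hb)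
  rwa [List.length_ofFn, hδn, span_singleton_eq_bot.mpr rfl, mem_bot] at h

end Ideal

namespace MonoidAlgebra

section Ring

variable {S : Type*} [Ring S] {G : Type*} [Group G]

theorem single_sub_one_mem_span_of_mem_zpowers {z g : G} (hg : g ∈ Subgroup.zpowers z) :
    single g (1 : S) - 1 ∈ Ideal.span {single z (1 : S) - 1} := by
  obtain ⟨k, rfl⟩ := Subgroup.mem_zpowers_iff.mp hg
  clear hg
  induction k using Int.induction_on with
  | zero => simp [one_def]
  | succ k ih =>
    have h : single (z ^ (k + 1 : ℤ)) (1 : S) - 1 =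
        single (z ^ (k : ℤ)) 1 * (single z 1 - 1) + (single (z ^ (k : ℤ)) 1 - 1) := by
      simp only [mul_sub, single_mul_single, mul_one, zpow_add_one]; abel
    rw [h]
    exact Ideal.add_mem _ (Ideal.mul_mem_left _ _ (Ideal.subset_span rfl)) ih
  | pred k ih =>
    have h : single (z ^ (-k - 1 : ℤ)) (1 : S) - 1 =
        (single (z ^ (-k : ℤ)) 1 - 1) - single (z ^ (-k - 1 : ℤ)) 1 * (single z 1 - 1) := by
      simp only [mul_sub, single_mul_single, mul_one, ← zpow_add_one, sub_add_cancel]; abel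
    rw [h]
    exact Ideal.sub_mem _ ih (Ideal.mul_mem_left _ _ (Ideal.subset_span rfl))

theorem mem_span_single_sub_one_of_mapDomain_mk_eq_zero {z : G} {f : S[G]}
    (hf : mapDomain (QuotientGroup.mk : G → G ⧸ Subgroup.zpowers z) f = 0) :
    f ∈ Ideal.span {single z (1 : S) - 1} := by
  set N := Subgroup.zpowers z
  -- `out (mk g) = g * n` with `n ∈ N`, so each term of `f - out (mk f)` is a multiple of `n⁻¹ - 1`.
  have hsub : ∀ f : S[G], f - mapDomain Quotient.out (mapDomain (QuotientGroup.mk : G → G ⧸ N) f)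
      ∈ Ideal.span {single z (1 : S) - 1} := by
    intro f
    induction f using induction_linear with
    | zero => simp
    | add f g hf hg =>
      simpa only [mapDomain_add, add_sub_add_comm] using Ideal.add_mem _ hf hg
    | single g c =>
      obtain ⟨n, hn⟩ := QuotientGroup.mk_out_eq_mul N g
      have h : single g c - mapDomain Quotient.out (mapDomain (QuotientGroup.mk : G → G ⧸ N)
          (single g c)) = single (g * n) c * (single (n⁻¹ : G) 1 - 1) := by
        simp only [mapDomain_single, hn, mul_sub, single_mul_single, mul_one,
          mul_inv_cancel_right]
      rw [h]
      exact Ideal.mul_mem_left _ _ (single_sub_one_mem_span_of_mem_zpowers (inv_mem n.2))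
  simpa only [hf, mapDomain_zero, sub_zero] using hsub f

end Ring

theorem lift_one_mapDomain {S : Type*} [CommSemiring S] {M N : Type*} [Monoid M] [Monoid N]
    (f : M →* N) (x : S[M]) : lift S S N 1 (mapDomain f x) = lift S S M 1 x := by
  induction x using induction_linear with
  | zero => simp
  | add x y hx hy => rw [mapDomain_add, map_add, map_add, hx, hy]
  | single g c => simp [lift_single]

theorem lift_one_map {R S : Type*} [CommSemiring R] [CommSemiring S] {M : Type*} [Monoid M]
    (f : R →+* S) (x : R[M]) : lift S S M 1 (map (f : R →+ S) x) = f (lift R R M 1 x) := by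
  induction x using induction_linear with
  | zero => simp
  | add x y hx hy => rw [MonoidAlgebra.map_add, map_add, map_add, hx, hy, map_add]
  | single g c => simp [lift_single]

theorem eq_zero_of_lift_one_eq_zero {S : Type*} [CommSemiring S] {M : Type*} [Monoid M]
    [Subsingleton M] {f : S[M]} (hf : lift S S M 1 f = 0) : f = 0 := by
  have hf1 : f = single 1 (f.coeff 1) := by
    ext g
    rw [Subsingleton.elim g 1]
    simp
  rw [hf1, lift_single] at hf
  rw [hf1, show f.coeff 1 = 0 by simpa using hf, single_zero]

theorem exists_eq_smul_of_mapRingHom_mk_eq_zero {R : Type*} [CommRing R] {M : Type*} [Monoid M]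
    {a : R} {f : R[M]} (hf : mapRingHom M (Ideal.Quotient.mk (Ideal.span {a})) f = 0) :
    ∃ z : R[M], f = a • z := by
  classical
  have hmem : ∀ g, ∃ b, b * a = f.coeff g := fun g =>
    Ideal.mem_span_singleton'.mp (Ideal.Quotient.eq_zero_iff_mem.mp
      (by simpa using congrArg (fun y => y.coeff g) hf))
  choose c hc using hmem
  refine ⟨∑ g ∈ f.coeff.support, single g (c g), ?_⟩
  conv_lhs => rw [← sum_coeff_single f]
  simp only [Finsupp.sum, Finset.smul_sum, smul_single, smul_eq_mul, ← hc, mul_comm]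

theorem list_prod_ofFn_eq_zero_of_card_eq_prime_pow {S : Type*} [CommRing S] {p : ℕ}
    (hp : p.Prime) (hpS : (p : S) = 0) (r : ℕ) {G : Type*} [Group G] (hG : Nat.card G = p ^ r)
    (x : Fin (p ^ r) → S[G]) (hx : ∀ i, lift S S G 1 (x i) = 0) : (List.ofFn x).prod = 0 := by
  induction r generalizing G with
  | zero =>
    have : Subsingleton G := (Nat.card_eq_one_iff_unique.mp hG).1
    exact List.prod_eq_zero (List.mem_ofFn.mpr ⟨⟨0, by simp⟩, eq_zero_of_lift_one_eq_zero (hx _)⟩)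
  | succ r ih =>
    have : Fact p.Prime := ⟨hp⟩
    obtain ⟨z, hzc, hz⟩ := IsPGroup.exists_mem_center_orderOf_eq hG r.succ_pos
    have : (Subgroup.zpowers z).Normal := Subgroup.normal_zpowers_of_mem_center hzc
    have hQ : Nat.card (G ⧸ Subgroup.zpowers z) = p ^ r := by
      have h := Subgroup.card_eq_card_quotient_mul_card_subgroup (Subgroup.zpowers z)
      rw [Nat.card_zpowers, hz, hG, pow_succ] at h
      exact (Nat.eq_of_mul_eq_mul_right hp.pos h).symm
    set δ : S[G] := single z 1 - 1
    have hblock : ∀ y : Fin (p ^ r) → S[G], (∀ i, lift S S G 1 (y i) = 0) →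
        (List.ofFn y).prod ∈ Ideal.span {δ} := by
      intro y hy
      apply mem_span_single_sub_one_of_mapDomain_mk_eq_zero
      have h := ih hQ (fun i => mapDomainRingHom S (QuotientGroup.mk' (Subgroup.zpowers z)) (y i))
        (fun i => (lift_one_mapDomain _ (y i)).trans (hy i))
      change mapDomainRingHom S (QuotientGroup.mk' _) (List.ofFn y).prod = 0
      rwa [map_list_prod, List.map_ofFn]
    have hδ : ∀ a, Commute δ a := fun a =>
      (single_commute (fun g => (Subgroup.mem_center_iff.mp hzc g).symm) Commute.one_left a).sub_left
        (Commute.one_left a)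
    have hδp : δ ^ p = 0 := by
      refine sub_one_pow_eq_zero_of_pow_eq_one hp ?_ ?_
      · rw [← map_natCast (algebraMap S S[G]), hpS, map_zero]
      · rw [single_pow, ← hz, pow_orderOf_eq_one, one_pow, one_def]
    rw [List.ofFn_congr (pow_succ p r) x]
    exact Ideal.list_prod_ofFn_eq_zero_of_forall_mem_span_singleton (s := {a | lift S S G 1 a = 0})
      hδ hδp hblock _ fun i => hx _

end MonoidAlgebra

/-- Let `p` be a prime, `G` a finite `p`-group of order `p ^ r`, and `R` any commutative
ring.  Let `I_G` be the augmentation ideal of the group algebra `R[G]`, i.e. the kernel of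
the `R`-algebra map `R[G] → R` sending every `g ∈ G` to `1`.  Then
`I_G ^ (p ^ r) ⊆ p·R[G]`: every product of `p ^ r` elements of `I_G` lies in `p·R[G]`. -/
theorem augmentationIdeal_pow_card_le (p r : ℕ) (hp : p.Prime)
    (G : Type*) [Group G] [Fintype G] (hG : Fintype.card G = p ^ r)
    (R : Type*) [CommRing R]
    (x : Fin (p ^ r) → MonoidAlgebra R G)
    (hx : ∀ i, x i ∈ RingHom.ker
      ((MonoidAlgebra.lift R R G 1 : MonoidAlgebra R G →ₐ[R] R) : MonoidAlgebra R G →+* R)) :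
    ∃ z : MonoidAlgebra R G, (List.ofFn x).prod = (p : MonoidAlgebra R G) * z := by
  set π := Ideal.Quotient.mk (Ideal.span {(p : R)})
  have hpS : ((p : ℕ) : R ⧸ Ideal.span {(p : R)}) = 0 := by
    rw [← map_natCast π, Ideal.Quotient.eq_zero_iff_mem]
    exact Ideal.mem_span_singleton_self _
  have hprod : mapRingHom G π (List.ofFn x).prod = 0 := by
    rw [map_list_prod, List.map_ofFn]
    refine list_prod_ofFn_eq_zero_of_card_eq_prime_pow hp hpS r
      (Nat.card_eq_fintype_card.trans hG) _ fun i => ?_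
    rw [Function.comp_apply, coe_mapRingHom, lift_one_map,
      show lift R R G 1 (x i) = 0 from RingHom.mem_ker.mp (hx i), map_zero]
  obtain ⟨z, hz⟩ := exists_eq_smul_of_mapRingHom_mk_eq_zero hprod
  exact ⟨z, by rw [hz, Nat.cast_smul_eq_nsmul, nsmul_eq_mul]⟩
end
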